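/- Let G > 0, let f be the Huber cost with threshold G, and consider the SGD iterates x_{t+1} = x_t - α_t(∇f(x_t) + z_t) with deterministic initialization satisfying 0 < ‖x₁‖ ≤ G, step-size α_t = 1/(2√(t+1)), and i.i.d. noise z_t ∈ {x₁, -x₁} each with probability 1/2. Then for any ε ∈ (0, ‖x₁‖²) and every t ≥ 1, P(min_{k∈[t]} ‖∇f(x_k)‖² > ε) ≥ 2·e^{-t·ln 2}. -/

import Mathlib

open MeasureTheory

/-- Gradient of the Huber cost with threshold `G`. -/
noncomputable def huberGrad {d : ℕ} (G : ℝ) (x : EuclideanSpace ℝ (Fin d)) :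
    EuclideanSpace ℝ (Fin d) :=
  if ‖x‖ ≤ G then x else (G / ‖x‖) • x

/-!
If every noise term equals `-x₁`, the stochastic gradient at `x₁` is `∇f(x₁) + z_j = x₁ - x₁ = 0`,
so the iterates stay at `x₁` and every squared gradient norm is `‖x₁‖² > ε`. By independence the
first `n = ⌊t⌋ - 1` noise terms all equal `-x₁` with probability `2^{-n} ≥ 2 e^{-t ln 2}`.
-/

open ProbabilityTheory Finset

theorem huberGrad_of_norm_le {d : ℕ} {G : ℝ} {x : EuclideanSpace ℝ (Fin d)} (hx : ‖x‖ ≤ G) :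
    huberGrad G x = x :=
  if_pos hx

theorem huber_sgd_iterate_eq_of_noise_eq_neg {d : ℕ} {G : ℝ} {x : EuclideanSpace ℝ (Fin d)}
    (hx : ‖x‖ ≤ G) (step : ℕ → ℝ) (z X : ℕ → EuclideanSpace ℝ (Fin d)) (hX1 : X 1 = x)
    (hrec : ∀ t, 1 ≤ t → X (t + 1) = X t - step t • (huberGrad G (X t) + z t))
    {n : ℕ} (hz : ∀ j, 1 ≤ j → j ≤ n → z j = -x) :
    ∀ k, 1 ≤ k → k ≤ n + 1 → X k = x := by
  intro k hk
  induction k, hk using Nat.le_induction with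
  | base => exact fun _ => hX1
  | succ k hk ih =>
    intro hkn
    rw [hrec k hk, ih (by omega), huberGrad_of_norm_le hx, hz k hk (by omega)]
    simp

theorem ProbabilityTheory.iIndepFun.measure_biInter_eq_pow {ι Ω β : Type*} [MeasurableSpace Ω]
    {μ : Measure Ω} [MeasurableSpace β] [MeasurableSingletonClass β] {z : ι → Ω → β}
    (hz : iIndepFun z μ)
    (S : Finset ι) (a : β) {p : ENNReal} (hp : ∀ j ∈ S, μ {ω | z j ω = a} = p) :
    μ (⋂ j ∈ S, {ω | z j ω = a}) = p ^ #S := by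
  rw [hz.meas_biInter (s := fun j => {ω | z j ω = a})
    fun j _ => ⟨{a}, measurableSet_singleton a, rfl⟩, prod_congr rfl hp, prod_const]

theorem two_mul_exp_neg_mul_log_two_le {t : ℝ} {n : ℕ} (hn : (n + 1 : ℝ) ≤ t) :
    2 * Real.exp (-t * Real.log 2) ≤ (1 / 2 : ℝ) ^ n := by
  calc 2 * Real.exp (-t * Real.log 2)
      ≤ 2 * Real.exp ((n + 1 : ℕ) * -Real.log 2) := by
        gcongr 2 * Real.exp ?_
        push_cast
        nlinarith [Real.log_pos one_lt_two]
    _ = (1 / 2 : ℝ) ^ n := by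
        rw [Real.exp_nat_mul, Real.exp_neg, Real.exp_log two_pos, pow_succ]
        ring

theorem sgd_tail_probability_lower_bound_general
    {Ω : Type*} [MeasurableSpace Ω] {μ : Measure Ω} [IsProbabilityMeasure μ]
    {d : ℕ} (G : ℝ)
    (x₁ : EuclideanSpace ℝ (Fin d)) (hx₁G : ‖x₁‖ ≤ G)
    (z : ℕ → Ω → EuclideanSpace ℝ (Fin d))
    (hindep : ProbabilityTheory.iIndepFun z μ)
    (hdist : ∀ t, 1 ≤ t →
      μ {ω | z t ω = x₁} = 1 / 2 ∧ μ {ω | z t ω = -x₁} = 1 / 2)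
    (X : ℕ → Ω → EuclideanSpace ℝ (Fin d))
    (hX1 : ∀ ω, X 1 ω = x₁)
    (hrec : ∀ t, 1 ≤ t → ∀ ω,
      X (t + 1) ω = X t ω - (1 / (2 * Real.sqrt (t + 1))) • (huberGrad G (X t ω) + z t ω))
    (ε : ℝ) (hε' : ε < ‖x₁‖ ^ 2) :
    ∀ t, 1 ≤ t →
      2 * Real.exp (-(t : ℝ) * Real.log 2) ≤
        (μ {ω | ∀ k : ℕ, 1 ≤ k → k ≤ t → ε < ‖huberGrad G (X k ω)‖ ^ 2}).toReal := by
  intro t ht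
  set n := ⌊t⌋₊ - 1
  have hfloor : 1 ≤ ⌊t⌋₊ := Nat.le_floor (by exact_mod_cast ht)
  have hnt : ((n + 1 : ℕ) : ℝ) ≤ t := by
    rw [Nat.sub_add_cancel hfloor]
    exact Nat.floor_le (by linarith)
  have hstay : (⋂ j ∈ Icc 1 n, {ω | z j ω = -x₁}) ⊆
      {ω | ∀ k : ℕ, 1 ≤ k → k ≤ t → ε < ‖huberGrad G (X k ω)‖ ^ 2} := by
    intro ω hω k hk hkt
    have hz : ∀ j, 1 ≤ j → j ≤ n → z j ω = -x₁ := fun j hj hjn =>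
      Set.mem_iInter₂.mp hω j (mem_Icc.mpr ⟨hj, hjn⟩)
    have hkn : k ≤ n + 1 := by rw [Nat.sub_add_cancel hfloor]; exact Nat.le_floor hkt
    rw [huber_sgd_iterate_eq_of_noise_eq_neg hx₁G _ (fun j => z j ω) (fun j => X j ω) (hX1 ω)
      (fun j hj => hrec j hj ω) hz k hk hkn, huberGrad_of_norm_le hx₁G]
    exact hε'
  calc 2 * Real.exp (-t * Real.log 2)
      ≤ (1 / 2 : ℝ) ^ n := two_mul_exp_neg_mul_log_two_le (by exact_mod_cast hnt)
    _ = (μ (⋂ j ∈ Icc 1 n, {ω | z j ω = -x₁})).toReal := by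
        rw [hindep.measure_biInter_eq_pow _ _ fun j hj => (hdist j (mem_Icc.mp hj).1).2,
          Nat.card_Icc, Nat.add_sub_cancel, ENNReal.toReal_pow]
        norm_num
    _ ≤ _ := ENNReal.toReal_mono (measure_ne_top μ _) (measure_mono hstay)

theorem sgd_tail_probability_lower_bound
    {Ω : Type*} [MeasurableSpace Ω] {μ : Measure Ω} [IsProbabilityMeasure μ]
    {d : ℕ} (G : ℝ) (hG : 0 < G)
    (x₁ : EuclideanSpace ℝ (Fin d)) (hx₁ : 0 < ‖x₁‖) (hx₁G : ‖x₁‖ ≤ G)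
    (z : ℕ → Ω → EuclideanSpace ℝ (Fin d))
    (hzmeas : ∀ t, Measurable (z t))
    (hindep : ProbabilityTheory.iIndepFun z μ)
    (hdist : ∀ t, 1 ≤ t →
      μ {ω | z t ω = x₁} = 1 / 2 ∧ μ {ω | z t ω = -x₁} = 1 / 2)
    (X : ℕ → Ω → EuclideanSpace ℝ (Fin d))
    (hX1 : ∀ ω, X 1 ω = x₁)
    (hrec : ∀ t, 1 ≤ t → ∀ ω,
      X (t + 1) ω = X t ω - (1 / (2 * Real.sqrt (t + 1))) • (huberGrad G (X t ω) + z t ω))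
    (ε : ℝ) (hε : 0 < ε) (hε' : ε < ‖x₁‖ ^ 2) :
    ∀ t, 1 ≤ t →
      2 * Real.exp (-(t : ℝ) * Real.log 2) ≤
        (μ {ω | ∀ k : ℕ, 1 ≤ k → k ≤ t → ε < ‖huberGrad G (X k ω)‖ ^ 2}).toReal :=
  sgd_tail_probability_lower_bound_general G x₁ hx₁G z hindep hdist X hX1 hrec ε hε'
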